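/- Let (A, d_A) be a cochain complex over ℤ and χ : A → A[2] a chain map. Form the complex B with B^n = A^n ⊕ A^{n-1} and differential d_B(a, b) = (d_A a + χ b, −d_A b). Let B_q = B[q] (polynomials in a degree-2 variable q) with differential d_{B,q}(a,b) = (d_A a + χ b + q b, −d_A b). If χ + q·id : A[q] → A[q] is injective in each degree, then the inclusion A → B_q, a ↦ (a, 0) in q-degree 0, is a quasi-isomorphism. -/

import Mathlib

/- Statement 6: Let (A, d) be a cochain complex over ℤ and χ : A → A[2] a chain map.
Form B with Bⁿ = Aⁿ ⊕ Aⁿ⁻¹ and d_B(a,b) = (d a + χ b, −d b), and its q-deformation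
B_q = B[q] (q of degree 2) with d_{B,q}(a,b) = (d a + χ b + q b, −d b).
If χ + q·id : A[q] → A[q] is injective in each degree, then the inclusion
A → B_q, a ↦ (a,0) in q-degree 0, is a quasi-isomorphism.

B_q is realized in degree n as finitely supported families over j ∈ ℕ (the power of q)
with values in A^{n−2j} × A^{n−2j−1}; quasi-isomorphism is stated elementarily as
"bijective on cohomology". -/

/-- Transport along an equality of degrees, as an additive map. -/
def castHom (B : ℤ → Type) [∀ n, AddCommGroup (B n)] {m n : ℤ} (h : m = n) :
    B m →+ B n where
  toFun x := h ▸ x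
  map_zero' := by subst h; rfl
  map_add' := by subst h; intro x y; rfl

/-- Degree-`n` part of `A[q]`, with `q` of degree 2. -/
abbrev Aq (A : ℤ → Type) [∀ n, AddCommGroup (A n)] (n : ℤ) : Type :=
  Π₀ j : ℕ, A (n - 2 * (j : ℤ))

/-- Multiplication by `q` (degree 2) on `A[q]`. -/
noncomputable def qShift (A : ℤ → Type) [∀ n, AddCommGroup (A n)] (n : ℤ) :
    Aq A n →+ Aq A (n + 2) :=
  DFinsupp.sumAddHom fun j : ℕ =>
    (DFinsupp.singleAddHom (fun j : ℕ => A (n + 2 - 2 * (j : ℤ))) (j + 1)).comp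
      (castHom A (by push_cast; ring))

/-- The map `χ + q·id : A[q] → A[q]` of degree 2, in degree `n`. -/
noncomputable def chiq (A : ℤ → Type) [∀ n, AddCommGroup (A n)]
    (χ : ∀ m : ℤ, A m →+ A (m + 2)) (n : ℤ) : Aq A n →+ Aq A (n + 2) :=
  DFinsupp.mapRange.addMonoidHom
      (fun j : ℕ => (castHom A (by ring)).comp (χ (n - 2 * (j : ℤ))))
    + qShift A n

/-- Degree-`n` part of `B_q = B[q]`, where `Bⁿ = Aⁿ × Aⁿ⁻¹`. -/
abbrev Bq (A : ℤ → Type) [∀ n, AddCommGroup (A n)] (n : ℤ) : Type :=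
  Π₀ j : ℕ, (A (n - 2 * (j : ℤ)) × A (n - 2 * (j : ℤ) - 1))

/-- The differential `d_{B,q}(a, b) = (d a + χ b + q b, −d b)` on `B_q`. -/
noncomputable def dBq (A : ℤ → Type) [∀ n, AddCommGroup (A n)]
    (d : ∀ m : ℤ, A m →+ A (m + 1)) (χ : ∀ m : ℤ, A m →+ A (m + 2)) (n : ℤ) :
    Bq A n →+ Bq A (n + 1) :=
  DFinsupp.mapRange.addMonoidHom (fun j : ℕ =>
    AddMonoidHom.prod
      (((castHom A (by ring)).comp ((d (n - 2 * (j : ℤ))).comp (AddMonoidHom.fst _ _)))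
        + ((castHom A (by ring)).comp
            ((χ (n - 2 * (j : ℤ) - 1)).comp (AddMonoidHom.snd _ _))))
      (- ((castHom A (by ring)).comp
            ((d (n - 2 * (j : ℤ) - 1)).comp (AddMonoidHom.snd _ _)))))
  + DFinsupp.sumAddHom (fun j : ℕ =>
      (DFinsupp.singleAddHom
          (fun j : ℕ => (A (n + 1 - 2 * (j : ℤ)) × A (n + 1 - 2 * (j : ℤ) - 1))) (j + 1)).comp
        (AddMonoidHom.prod
          ((castHom A (by push_cast; ring)).comp (AddMonoidHom.snd _ _))
          0))

/-- A chain map `f : (X, dX) → (Y, dY)` is a quasi-isomorphism: it is bijective on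
cohomology in every degree (stated elementarily). -/
def IsQuasiIso (X Y : ℤ → Type) [∀ n, AddCommGroup (X n)] [∀ n, AddCommGroup (Y n)]
    (dX : ∀ n : ℤ, X n →+ X (n + 1)) (dY : ∀ n : ℤ, Y n →+ Y (n + 1))
    (f : ∀ n : ℤ, X n →+ Y n) : Prop :=
  ∀ n : ℤ,
    (∀ y : Y n, dY n y = 0 → ∃ x : X n, dX n x = 0 ∧
      ∃ z : Y (n - 1), f n x - y = castHom Y (by ring) (dY (n - 1) z)) ∧
    (∀ x : X n, dX n x = 0 →
      (∃ z : Y (n - 1), f n x = castHom Y (by ring) (dY (n - 1) z)) →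
      ∃ w : X (n - 1), x = castHom X (by ring) (dX (n - 1) w))

/-!
Write an element `y` of `B_q` in degree `n` as `(a, b)` with `a = Σ a_j q^j`, `b = Σ b_j q^j`, so that
`d_{B,q}(a, b) = (d a + (χ + q) b, -d b)`. Dividing `a` by `χ + q` from the top `q`-degree downwards
gives `v` with `a_{j+1} + χ v_{j+1} + v_j = 0` for all `j`, so `y + d_{B,q}(0, v)` has first component
concentrated in `q`-degree `0`. If moreover the positive `q`-degree part of the first component of
`d_{B,q} y` vanishes, then `e = d v - b` satisfies `e_j = -χ e_{j+1}` and vanishes for large `j`, so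
`d v = b` and `y` is cohomologous to an element `(x, 0)` of `A`. Applied to a cocycle this gives
surjectivity on cohomology; applied to a primitive of an element of `A` it gives injectivity.
-/

section castHom

variable (B : ℤ → Type) [∀ n, AddCommGroup (B n)]

@[simp]
lemma castHom_rfl {m : ℤ} (h : m = m) (x : B m) : castHom B h x = x := rfl

@[simp]
lemma castHom_castHom {m n k : ℤ} (h₁ : m = n) (h₂ : n = k) (x : B m) :
    castHom B h₂ (castHom B h₁ x) = castHom B (h₁.trans h₂) x := by
  subst h₁ h₂; rfl

@[simp]
lemma castHom_inj {m n : ℤ} (h : m = n) {x y : B m} : castHom B h x = castHom B h y ↔ x = y := by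
  subst h; rfl

@[simp]
lemma castHom_eq_zero_iff {m n : ℤ} (h : m = n) (x : B m) : castHom B h x = 0 ↔ x = 0 := by
  subst h; rfl

@[simp]
lemma map_castHom {k : ℤ} (φ : ∀ m, B m →+ B (m + k)) {m n : ℤ} (h : m = n) (x : B m) :
    φ n (castHom B h x) = castHom B (by omega) (φ m x) := by
  subst h; rfl

end castHom

section shift

variable {β γ : ℕ → Type} [∀ j, AddCommGroup (β j)] [∀ j, AddCommGroup (γ j)]
  (g : ∀ j, β j →+ γ (j + 1))

lemma sumAddHom_single_succ_apply_zero (y : Π₀ j, β j) :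
    DFinsupp.sumAddHom (fun j => (DFinsupp.singleAddHom γ (j + 1)).comp (g j)) y 0 = 0 := by
  induction y using DFinsupp.induction with
  | h0 => simp
  | ha i b f _ _ ih => simp [ih, DFinsupp.single_apply]

lemma sumAddHom_single_succ_apply_succ (y : Π₀ j, β j) (k : ℕ) :
    DFinsupp.sumAddHom (fun j => (DFinsupp.singleAddHom γ (j + 1)).comp (g j)) y (k + 1)
      = g k (y k) := by
  induction y using DFinsupp.induction with
  | h0 => simp
  | ha i b f _ _ ih =>
    rcases eq_or_ne i k with rfl | hik
    · simp [ih]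
    · simp [ih, DFinsupp.single_apply, hik]

end shift

lemma exists_dfinsupp_coe_eq {ι : Type*} [DecidableEq ι] {β : ι → Type*} [∀ i, Zero (β i)]
    (f : ∀ i, β i) (s : Finset ι) (hf : ∀ i ∉ s, f i = 0) : ∃ g : Π₀ i, β i, ⇑g = f :=
  ⟨DFinsupp.mk s fun i => f i, funext fun i => by
    rw [DFinsupp.mk_apply]
    split_ifs with hi
    · rfl
    · exact (hf i hi).symm⟩

lemma exists_forall_le_apply_eq_zero {β : ℕ → Type*} [∀ j, Zero (β j)] (y : Π₀ j, β j) :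
    ∃ N : ℕ, ∀ j, N ≤ j → y j = 0 := by
  classical
  obtain ⟨N, hN⟩ := Finset.exists_nat_subset_range y.support
  exact ⟨N, fun j hj => DFinsupp.notMem_support_iff.1 fun h =>
    (Finset.mem_range.1 (hN h)).not_ge hj⟩

def downwardRec {U : ℕ → Type*} [∀ j, Zero (U j)] (F : ∀ j, U (j + 1) → U j) (N : ℕ) :
    ∀ j, U j
  | j => if N ≤ j then 0 else F j (downwardRec F N (j + 1))
termination_by j => N - j

section downwardRec

variable {U : ℕ → Type*} [∀ j, Zero (U j)] (F : ∀ j, U (j + 1) → U j) (N : ℕ)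

lemma downwardRec_of_le {j : ℕ} (h : N ≤ j) : downwardRec F N j = 0 := by
  rw [downwardRec, if_pos h]

lemma downwardRec_eq (hF : ∀ j, N ≤ j → F j 0 = 0) (j : ℕ) :
    downwardRec F N j = F j (downwardRec F N (j + 1)) := by
  rw [downwardRec]
  split_ifs with h
  · rw [downwardRec_of_le F N (by omega), hF j h]
  · rfl

end downwardRec

section Bq

variable (A : ℤ → Type) [∀ n, AddCommGroup (A n)]
  (d : ∀ m : ℤ, A m →+ A (m + 1)) (χ : ∀ m : ℤ, A m →+ A (m + 2))

@[simp]
lemma castHom_Bq_apply {m n : ℤ} (h : m = n) (y : Bq A m) (j : ℕ) :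
    castHom (Bq A) h y j = (castHom A (by omega) (y j).1, castHom A (by omega) (y j).2) := by
  subst h; rfl


lemma dBq_apply_zero (n : ℤ) (y : Bq A n) :
    dBq A d χ n y 0 =
      (castHom A (by omega) (d _ (y 0).1) + castHom A (by omega) (χ _ (y 0).2),
        -castHom A (by omega) (d _ (y 0).2)) := by
  rw [dBq, AddMonoidHom.add_apply, DFinsupp.add_apply, sumAddHom_single_succ_apply_zero,
    add_zero]
  rfl

lemma dBq_apply_succ (n : ℤ) (y : Bq A n) (j : ℕ) :
    dBq A d χ n y (j + 1) =
      (castHom A (by omega) (d _ (y (j + 1)).1) + castHom A (by omega) (χ _ (y (j + 1)).2)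
          + castHom A (by omega) (y j).2,
        -castHom A (by omega) (d _ (y (j + 1)).2)) := by
  rw [dBq, AddMonoidHom.add_apply, DFinsupp.add_apply, sumAddHom_single_succ_apply_succ]
  ext <;> simp

@[simp]
lemma dBq_apply_snd (n : ℤ) (y : Bq A n) (j : ℕ) :
    (dBq A d χ n y j).2 = -castHom A (by omega) (d _ (y j).2) := by
  cases j with
  | zero => simp [dBq_apply_zero]
  | succ j => simp [dBq_apply_succ]

lemma dBq_castHom {m n : ℤ} (h : m = n) (y : Bq A m) :
    dBq A d χ n (castHom (Bq A) h y) = castHom (Bq A) (by omega) (dBq A d χ m y) := by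
  subst h; rfl

lemma dBq_dBq (hdd : ∀ (m : ℤ) (x : A m), d (m + 1) (d m x) = 0)
    (hχ : ∀ (m : ℤ) (x : A m),
      castHom A (by ring : (m + 1) + 2 = (m + 2) + 1) (χ (m + 1) (d m x)) = d (m + 2) (χ m x))
    (n : ℤ) (y : Bq A n) : dBq A d χ (n + 1) (dBq A d χ n y) = 0 := by
  ext (_ | j) : 1
  · simp [dBq_apply_zero, hdd, ← hχ]
  · simp [dBq_apply_succ, hdd, ← hχ]

def inclBq (n : ℤ) : A n →+ Bq A n :=
  (DFinsupp.singleAddHom (fun j : ℕ => (A (n - 2 * (j : ℤ)) × A (n - 2 * (j : ℤ) - 1))) 0).comp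
    ((AddMonoidHom.inl _ _).comp (castHom A (by omega : n = n - 2 * ((0 : ℕ) : ℤ))))

@[simp]
lemma inclBq_apply_zero (n : ℤ) (x : A n) : inclBq A n x 0 = (castHom A (by omega) x, 0) := by
  simp [inclBq]

@[simp]
lemma inclBq_apply_succ (n : ℤ) (x : A n) (j : ℕ) : inclBq A n x (j + 1) = 0 := by
  simp [inclBq]

@[simp]
lemma inclBq_apply_snd (n : ℤ) (x : A n) (j : ℕ) : (inclBq A n x j).2 = 0 := by
  cases j <;> simp

lemma inclBq_injective (n : ℤ) : Function.Injective (inclBq A n) := by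
  intro x x' h
  simpa using congrArg (fun y : Bq A n => (y 0).1) h

lemma inclBq_castHom {m n : ℤ} (h : m = n) (x : A m) :
    inclBq A n (castHom A h x) = castHom (Bq A) h (inclBq A m x) := by
  subst h; rfl

lemma dBq_inclBq (n : ℤ) (x : A n) : dBq A d χ n (inclBq A n x) = inclBq A (n + 1) (d n x) := by
  ext (_ | j) : 1
  · simp [dBq_apply_zero]
  · simp [dBq_apply_succ]

lemma exists_inclBq_sub_eq_dBq
    (hχ : ∀ (m : ℤ) (x : A m),
      castHom A (by ring : (m + 1) + 2 = (m + 2) + 1) (χ (m + 1) (d m x)) = d (m + 2) (χ m x))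
    {n : ℤ} (y : Bq A n) (hy : ∀ j, (dBq A d χ n y (j + 1)).1 = 0) :
    ∃ (x : A n) (z : Bq A (n - 1)),
      inclBq A n x - y = castHom (Bq A) (by omega) (dBq A d χ (n - 1) z) := by
  obtain ⟨N, hN⟩ := exists_forall_le_apply_eq_zero y
  set v := downwardRec (U := fun j : ℕ => A (n - 2 * j - 2))
    (fun j u => -(castHom A (by omega) (y (j + 1)).1 + castHom A (by omega) (χ _ u))) N
  have hv : ∀ j, v j = -(castHom A (by omega) (y (j + 1)).1
      + castHom A (by omega) (χ _ (v (j + 1)))) :=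
    downwardRec_eq _ N fun j hj => by simp [hN (j + 1) (by omega)]
  have hdv : ∀ j, d _ (v j) = castHom A (by omega) (y j).2 := by
    intro j
    refine Nat.decreasingInduction (motive := fun k _ => d _ (v k) = castHom A (by omega) (y k).2)
      (fun k _ ih => ?_) ?_ (Nat.le_add_right j N)
    · have hyk := congrArg
        (castHom A (by omega : n + 1 - 2 * ((k + 1 : ℕ) : ℤ) = n - 2 * k - 2 + 1)) (hy k)
      rw [dBq_apply_succ] at hyk
      rw [hv k, map_neg, map_add, map_castHom, map_castHom, ← hχ, ih]
      simp only [map_castHom, castHom_castHom, map_add, map_zero] at hyk ⊢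
      linear_combination (norm := abel) -hyk
    · simp [v, downwardRec_of_le, hN]
  obtain ⟨z, hz⟩ := exists_dfinsupp_coe_eq
    (β := fun j : ℕ => A (n - 1 - 2 * j) × A (n - 1 - 2 * j - 1))
    (fun j => (0, castHom A (by omega) (v j))) (Finset.range N)
    fun j hj => by simp [v, downwardRec_of_le _ _ (by simpa using hj)]
  refine ⟨castHom A (by omega) ((y 0).1 + castHom A (by omega) (χ _ (v 0))), z, ?_⟩
  ext (_ | j) : 1
  · simp only [DFinsupp.sub_apply, inclBq_apply_zero, castHom_Bq_apply, dBq_apply_zero, hz,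
      map_zero, map_castHom, hdv, castHom_castHom]
    ext <;> simp
  · simp only [DFinsupp.sub_apply, inclBq_apply_succ, castHom_Bq_apply, dBq_apply_succ, hz,
      map_zero, map_castHom, hdv, castHom_castHom]
    rw [hv j]
    ext <;> simp

end Bq

theorem stmt6 (A : ℤ → Type) [∀ n, AddCommGroup (A n)]
    (d : ∀ m : ℤ, A m →+ A (m + 1))
    (hdd : ∀ (m : ℤ) (x : A m), d (m + 1) (d m x) = 0)
    (χ : ∀ m : ℤ, A m →+ A (m + 2))
    (hχ : ∀ (m : ℤ) (x : A m),
      castHom A (by ring : (m + 1) + 2 = (m + 2) + 1) (χ (m + 1) (d m x))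
        = d (m + 2) (χ m x)) :
    IsQuasiIso A (Bq A) d (dBq A d χ)
      (fun n =>
        (DFinsupp.singleAddHom
            (fun j : ℕ => (A (n - 2 * (j : ℤ)) × A (n - 2 * (j : ℤ) - 1))) 0).comp
          ((AddMonoidHom.inl _ _).comp
            (castHom A (by push_cast; ring : n = n - 2 * ((0 : ℕ) : ℤ))))) := by
  change IsQuasiIso A (Bq A) d (dBq A d χ) (inclBq A)
  intro n
  refine ⟨fun y hy => ?_, fun x _ ⟨z, hz⟩ => ?_⟩
  · obtain ⟨x, z, hxz⟩ := exists_inclBq_sub_eq_dBq A d χ hχ y fun j => by simp [hy]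
    refine ⟨x, inclBq_injective A (n + 1) ?_, z, hxz⟩
    have := congrArg (dBq A d χ n) hxz
    rw [map_sub, hy, sub_zero, dBq_inclBq, dBq_castHom, dBq_dBq A d χ hdd hχ, map_zero] at this
    rw [this, map_zero]
  · have hdz : ∀ j, (dBq A d χ (n - 1) z (j + 1)).1 = 0 := fun j => by
      have h := congrArg (fun y : Bq A n => (y (j + 1)).1) hz
      simp only [inclBq_apply_succ, castHom_Bq_apply, Prod.fst_zero] at h
      exact (castHom_eq_zero_iff A _ _).1 h.symm
    obtain ⟨x', z', hxz'⟩ := exists_inclBq_sub_eq_dBq A d χ hχ z hdz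
    refine ⟨x', inclBq_injective A n ?_⟩
    rw [hz, inclBq_castHom, ← dBq_inclBq, sub_eq_iff_eq_add.1 hxz', map_add, dBq_castHom,
      dBq_dBq A d χ hdd hχ, map_zero, zero_add]
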